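/- The plane curve C₃₀ defined by Z³⁰ + F₃₀(X,Y) = 0 is smooth: there is no nonzero vector (x,y,z) ∈ ℂ³ at which all three partial derivatives of the polynomial Z³⁰ + F₃₀(X,Y) vanish simultaneously. -/

import Mathlib

/-!
`∂G/∂Z = 30 Z²⁹` forces `z = 0`, so a singular point would be a common nonzero zero of the
partials of the binary form `F₃₀` (Klein's icosahedral invariant, which is squarefree). An explicit
Bézout identity `x⁵⁴ = A · ∂F₃₀/∂X + B · ∂F₃₀/∂Y` rules this out: it gives `x = 0`, and then
`∂F₃₀/∂Y (0, y) = 30 y²⁹` gives `y = 0`.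
-/

noncomputable section
open MvPolynomial

/-- `G = Z³⁰ + F₃₀(X, Y)` with `X = X 0`, `Y = X 1`, `Z = X 2`. -/
def G30 : MvPolynomial (Fin 3) ℂ :=
  X 2 ^ 30 +
    (X 0 ^ 30 + 522 * (X 0 ^ 25 * X 1 ^ 5 - X 0 ^ 5 * X 1 ^ 25)
      - 10005 * (X 0 ^ 20 * X 1 ^ 10 + X 0 ^ 10 * X 1 ^ 20) + X 1 ^ 30)

@[simp]
theorem Derivation.map_ofNat {R A M : Type*} [CommSemiring R] [CommSemiring A] [AddCommMonoid M]
    [Algebra R A] [Module A M] [Module R M] (D : Derivation R A M) (n : ℕ) [n.AtLeastTwo] :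
    D (no_index (OfNat.ofNat n) : A) = 0 := by
  rw [← Nat.cast_ofNat]
  exact D.map_natCast n

def derivXF30 (x y : ℂ) : ℂ :=
  30 * x ^ 29 + 522 * (25 * x ^ 24 * y ^ 5 - 5 * x ^ 4 * y ^ 25)
    - 10005 * (20 * x ^ 19 * y ^ 10 + 10 * x ^ 9 * y ^ 20)

def derivYF30 (x y : ℂ) : ℂ :=
  522 * (5 * x ^ 25 * y ^ 4 - 25 * x ^ 5 * y ^ 24)
    - 10005 * (10 * x ^ 20 * y ^ 9 + 20 * x ^ 10 * y ^ 19) + 30 * y ^ 29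

theorem eval_pderiv_zero_G30 (v : Fin 3 → ℂ) :
    eval v (pderiv 0 G30) = derivXF30 (v 0) (v 1) := by
  simp only [G30, derivXF30, map_add, map_sub, map_mul, map_pow, Derivation.leibniz,
    Derivation.leibniz_pow, Derivation.map_ofNat, pderiv_X, Pi.single_apply, Fin.reduceEq,
    ↓reduceIte, eval_X, eval_ofNat, map_zero, map_one, map_natCast, smul_eq_mul, nsmul_eq_mul]
  ring

theorem eval_pderiv_one_G30 (v : Fin 3 → ℂ) :
    eval v (pderiv 1 G30) = derivYF30 (v 0) (v 1) := by
  simp only [G30, derivYF30, map_add, map_sub, map_mul, map_pow, Derivation.leibniz,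
    Derivation.leibniz_pow, Derivation.map_ofNat, pderiv_X, Pi.single_apply, Fin.reduceEq,
    ↓reduceIte, eval_X, eval_ofNat, map_zero, map_one, map_natCast, smul_eq_mul, nsmul_eq_mul]
  ring

theorem eval_pderiv_two_G30 (v : Fin 3 → ℂ) : eval v (pderiv 2 G30) = 30 * v 2 ^ 29 := by
  simp only [G30, map_add, map_sub, map_mul, map_pow, Derivation.leibniz,
    Derivation.leibniz_pow, Derivation.map_ofNat, pderiv_X, Pi.single_apply, Fin.reduceEq,
    ↓reduceIte, eval_X, eval_ofNat, map_zero, map_one, map_natCast, smul_eq_mul, nsmul_eq_mul]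
  ring

/-- The cofactors are the extended-Euclid solution of `A(t) f_X(t) + B(t) f_Y(t) = 1` for the
dehomogenized partials `f_X(t) = ∂F₃₀/∂X (1, t)`, `f_Y(t) = ∂F₃₀/∂Y (1, t)`, homogenized to
degree 25. -/
theorem pow_54_eq_bezout_derivF30 (x y : ℂ) :
    x ^ 54 =
      (1/30 * x ^ 25 - 21763020101/19531250000 * x ^ 20 * y ^ 5
        + 2986915639/351562500000 * x ^ 15 * y ^ 10
        - 2350285336231/1054687500000 * x ^ 10 * y ^ 15
        - 17035429603/117187500000 * x ^ 5 * y ^ 20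
        + 352454081/1054687500000 * y ^ 25) * derivXF30 x y +
      (-3005058677/19531250000 * x ^ 24 * y + 2350753468789/1054687500000 * x ^ 19 * y ^ 6
        - 497319463/117187500000 * x ^ 14 * y ^ 11
        + 1175317676431/1054687500000 * x ^ 9 * y ^ 16
        + 10221168349/351562500000 * x ^ 4 * y ^ 21) * derivYF30 x y := by
  unfold derivXF30 derivYF30
  ring

theorem eq_zero_of_derivXF30_eq_zero_of_derivYF30_eq_zero {x y : ℂ}
    (hX : derivXF30 x y = 0) (hY : derivYF30 x y = 0) : x = 0 ∧ y = 0 := by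
  have hx : x = 0 := pow_eq_zero_iff (n := 54) (by norm_num) |>.mp <| by
    rw [pow_54_eq_bezout_derivF30, hX, hY]
    ring
  refine ⟨hx, pow_eq_zero_iff (n := 29) (by norm_num) |>.mp ?_⟩
  simpa [derivYF30, hx] using hY

theorem stmt3 :
    ¬ ∃ v : Fin 3 → ℂ, v ≠ 0 ∧ ∀ i : Fin 3, eval v (pderiv i G30) = 0 := by
  rintro ⟨v, hv, h⟩
  have hz : v 2 = 0 := by simpa [eval_pderiv_two_G30] using h 2
  obtain ⟨hx, hy⟩ := eq_zero_of_derivXF30_eq_zero_of_derivYF30_eq_zero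
    (eval_pderiv_zero_G30 v ▸ h 0) (eval_pderiv_one_G30 v ▸ h 1)
  exact hv <| funext fun i => by fin_cases i <;> assumption
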